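/- arXiv:2207.06840 — 2 statements merged into one kernel-verified Lean document; each statement's English description precedes it below -/
import Mathlib

section
/- Let G be an abelian group acting by homeomorphisms on a nonempty Hausdorff topological space X such that every G-orbit is dense in X. Suppose the action is essentially free, i.e. for every g ≠ 1 in G the fixed-point set {x ∈ X : g • x = x} has empty interior. Then the action is free: for every g in G and x in X, g • x = x implies g = 1. -/
/-! The fixed-point set of `g` is closed (Hausdorff) and, since `G` is abelian, invariant under
the action. In a minimal action a nonempty closed invariant set is everything, so an element
with a single fixed point fixes all of `X`, and essential freeness forces it to be `1`. -/

open MulAction Set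

theorem isClosed_fixedBy {M X : Type*} [Monoid M] [TopologicalSpace X] [T2Space X]
    [MulAction M X] [ContinuousConstSMul M X] (g : M) : IsClosed (fixedBy X g) :=
  isClosed_eq (continuous_const_smul g) continuous_id

theorem smul_mem_fixedBy_of_mem {M X : Type*} [CommMonoid M] [MulAction M X] {g : M} {x : X}
    (hx : x ∈ fixedBy X g) (h : M) : h • x ∈ fixedBy X g := by
  rw [mem_fixedBy, smul_comm, hx]

theorem fixedBy_eq_univ_of_mem {M X : Type*} [CommMonoid M] [TopologicalSpace X] [T2Space X]
    [MulAction M X] [ContinuousConstSMul M X] [IsMinimal M X] {g : M} {x : X}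
    (hx : x ∈ fixedBy X g) : fixedBy X g = univ := by
  refine (eq_empty_or_univ_of_smul_invariant_closed M (isClosed_fixedBy g) ?_).resolve_left
    (nonempty_of_mem hx).ne_empty
  rintro h _ ⟨y, hy, rfl⟩
  exact smul_mem_fixedBy_of_mem hy h

theorem essentiallyFree_minimal_action_is_free_general
    {G X : Type*} [CommGroup G] [TopologicalSpace X] [T2Space X]
    [MulAction G X] [ContinuousConstSMul G X]
    (hmin : ∀ x : X, Dense (MulAction.orbit G x))
    (hess : ∀ g : G, g ≠ 1 → interior {x : X | g • x = x} = ∅) :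
    ∀ (g : G) (x : X), g • x = x → g = 1 := by
  intro g x hgx
  by_contra hg
  have : IsMinimal G X := ⟨hmin⟩
  have hfix : fixedBy X g = univ := fixedBy_eq_univ_of_mem hgx
  have hint := hess g hg
  rw [← fixedBy, hfix, interior_univ] at hint
  exact eq_empty_iff_forall_notMem.mp hint x (mem_univ x)

/-- An essentially free minimal action of an abelian group by homeomorphisms
on a nonempty Hausdorff space is free. -/
theorem essentiallyFree_minimal_action_is_free
    {G X : Type*} [CommGroup G] [TopologicalSpace X] [T2Space X]
    [MulAction G X] [ContinuousConstSMul G X] [Nonempty X]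
    (hmin : ∀ x : X, Dense (MulAction.orbit G x))
    (hess : ∀ g : G, g ≠ 1 → interior {x : X | g • x = x} = ∅) :
    ∀ (g : G) (x : X), g • x = x → g = 1 :=
  essentiallyFree_minimal_action_is_free_general hmin hess
end

section
/- Let X be a compact Hausdorff space and T : X → X a homeomorphism. Let a : X × ℝ → ℝ be a continuous function satisfying a(x, t + 1) = a(T(x), t) for all x ∈ X and t ∈ ℝ. Then the following are equivalent: (i) there exists a continuous function b : X × ℝ → ℝ with b(x, t + 1) = b(T(x), t) for all x, t, such that for every x the function t ↦ b(x, t) is differentiable with derivative a(x, t) at every t; (ii) there exists a continuous function f : X → ℝ such that ∫₀¹ a(x, t) dt = f(T(x)) − f(x) for all x ∈ X. (This realizes the identification of the top tangential de Rham cohomology of the mapping torus of T with the coinvariants C(X, ℝ)/{f∘T − f}: the equivariant function a represents a tangential 1-form a(x,t)dt, and it is a tangential coboundary exactly when its leafwise integral is a coboundary for T.) -/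
open MeasureTheory intervalIntegral

/-! The primitive `B(x, t) = ∫₀ᵗ a(x, s) ds` satisfies `B(x, t + 1) = B(x, 1) + B(T x, t)`, so it
fails to be equivariant exactly by the leafwise integral `x ↦ B(x, 1)`. If that integral is
`f ∘ T - f`, then `B + f` is an equivariant primitive of `a`; conversely, for an equivariant
primitive `b` the fundamental theorem of calculus gives `B(x, 1) = b(T x, 0) - b(x, 0)`. -/

theorem integral_zero_add_one_of_shift_eq {E : Type*} [NormedAddCommGroup E] [NormedSpace ℝ E]
    {g h : ℝ → E} (hg : Continuous g) (hgh : ∀ s, g (s + 1) = h s) (t : ℝ) :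
    ∫ s in (0 : ℝ)..t + 1, g s = (∫ s in (0 : ℝ)..1, g s) + ∫ s in (0 : ℝ)..t, h s := by
  have hshift : ∫ s in (0 : ℝ)..t, h s = ∫ s in (1 : ℝ)..t + 1, g s := by
    simpa only [hgh, zero_add] using integral_comp_add_right g (a := 0) (b := t) 1
  rw [hshift, integral_add_adjacent_intervals (hg.intervalIntegrable 0 1)
    (hg.intervalIntegrable 1 (t + 1))]

section LeafwisePrimitive

variable {X : Type*} [TopologicalSpace X] {a : X × ℝ → ℝ}

noncomputable def leafwisePrimitive (a : X × ℝ → ℝ) (p : X × ℝ) : ℝ :=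
  ∫ t in (0 : ℝ)..p.2, a (p.1, t)

theorem continuous_leafwisePrimitive (ha : Continuous a) : Continuous (leafwisePrimitive a) :=
  continuous_parametric_primitive_of_continuous (f := fun x t => a (x, t)) ha

theorem hasDerivAt_leafwisePrimitive (ha : Continuous a) (x : X) (t : ℝ) :
    HasDerivAt (fun τ => leafwisePrimitive a (x, τ)) (a (x, t)) t :=
  (ha.comp (Continuous.prodMk_right x)).integral_hasStrictDerivAt 0 t |>.hasDerivAt

theorem leafwisePrimitive_add_one {T : X → X} (ha : Continuous a)
    (heq : ∀ x t, a (x, t + 1) = a (T x, t)) (x : X) (t : ℝ) :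
    leafwisePrimitive a (x, t + 1) = leafwisePrimitive a (x, 1) + leafwisePrimitive a (T x, t) :=
  integral_zero_add_one_of_shift_eq (ha.comp (Continuous.prodMk_right x)) (heq x) t

end LeafwisePrimitive

theorem tangential_coboundary_iff_integral_coboundary_general
    {X : Type*} [TopologicalSpace X]
    (T : X ≃ₜ X) (a : X × ℝ → ℝ) (ha : Continuous a)
    (heq : ∀ (x : X) (t : ℝ), a (x, t + 1) = a (T x, t)) :
    (∃ b : X × ℝ → ℝ, Continuous b ∧ (∀ (x : X) (t : ℝ), b (x, t + 1) = b (T x, t)) ∧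
        ∀ (x : X) (t : ℝ), HasDerivAt (fun τ : ℝ => b (x, τ)) (a (x, t)) t) ↔
      (∃ f : X → ℝ, Continuous f ∧
        ∀ x : X, (∫ t in (0 : ℝ)..1, a (x, t)) = f (T x) - f x) := by
  constructor
  · rintro ⟨b, hb, hbeq, hbd⟩
    refine ⟨fun x => b (x, 0), hb.comp (Continuous.prodMk_left 0), fun x => ?_⟩
    rw [integral_eq_sub_of_hasDerivAt (fun t _ => hbd x t)
      ((ha.comp (Continuous.prodMk_right x)).intervalIntegrable 0 1), ← zero_add (1 : ℝ), hbeq]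
  · rintro ⟨f, hf, hfeq⟩
    refine ⟨fun p => leafwisePrimitive a p + f p.1,
      (continuous_leafwisePrimitive ha).add (hf.comp continuous_fst), fun x t => ?_,
      fun x t => (hasDerivAt_leafwisePrimitive ha x t).add_const (f x)⟩
    have hperiod : leafwisePrimitive a (x, 1) = f (T x) - f x := hfeq x
    show leafwisePrimitive a (x, t + 1) + f x = leafwisePrimitive a (T x, t) + f (T x)
    rw [leafwisePrimitive_add_one ha heq, hperiod]
    ring

/-- for a homeomorphism `T` of a compact Hausdorff space `X` and a continuous
`a : X × ℝ → ℝ` with `a(x, t+1) = a(T x, t)`, the following are equivalent: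
(i) `a` is a tangential coboundary, i.e. `a = ∂b/∂t` for a continuous equivariant
`b : X × ℝ → ℝ`; (ii) the leafwise integral `∫₀¹ a(x,t) dt` is a coboundary for `T`,
i.e. equals `f(T x) - f(x)` for some continuous `f : X → ℝ`. -/
theorem tangential_coboundary_iff_integral_coboundary
    {X : Type*} [TopologicalSpace X] [CompactSpace X] [T2Space X]
    (T : X ≃ₜ X) (a : X × ℝ → ℝ) (ha : Continuous a)
    (heq : ∀ (x : X) (t : ℝ), a (x, t + 1) = a (T x, t)) :
    (∃ b : X × ℝ → ℝ, Continuous b ∧ (∀ (x : X) (t : ℝ), b (x, t + 1) = b (T x, t)) ∧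
        ∀ (x : X) (t : ℝ), HasDerivAt (fun τ : ℝ => b (x, τ)) (a (x, t)) t) ↔
      (∃ f : X → ℝ, Continuous f ∧
        ∀ x : X, (∫ t in (0 : ℝ)..1, a (x, t)) = f (T x) - f x) :=
  tangential_coboundary_iff_integral_coboundary_general T a ha heq
end
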